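/- For every w ∈ [0,1], T(w) ≤ S_con(w), where T(w) = (1/7)w^4 + (6/7)(1/3)w^6 + (6/7)(2/3)w^8 and S_con(w) = (1/15)w^2 + (14/15)(1/7)w^4 + (14/15)(6/7)(1/3)w^6 + (14/15)(6/7)(2/3)w^8. -/
import Mathlib


noncomputable def T (w : ℝ) : ℝ :=
  (1/7) * w^4 + (6/7) * (1/3) * w^6 + (6/7) * (2/3) * w^8

noncomputable def S_con (w : ℝ) : ℝ :=
  (1/15) * w^2 + (14/15) * (1/7) * w^4 + (14/15) * (6/7) * (1/3) * w^6 +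
    (14/15) * (6/7) * (2/3) * w^8

theorem T_le_S_con (w : ℝ) (hw0 : 0 ≤ w) (hw1 : w ≤ 1) : T w ≤ S_con w := by
  unfold T S_con
  nlinarith [pow_le_pow_of_le_one hw0 hw1 (show 2 ≤ 4 by norm_num), pow_le_pow_of_le_one hw0 hw1 (show 2 ≤ 6 by norm_num), pow_le_pow_of_le_one hw0 hw1 (show 2 ≤ 8 by norm_num), sq_nonneg w]
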